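/- arXiv:1506.07682 — 4 statements merged into one kernel-verified Lean document; each statement's English description precedes it below -/
import Mathlib

section
/- Let V be a uniformly smooth Banach space, let f : [0,T] → V be continuous, and let ε > 0. Then there exists a continuous function φ : [0,T] → V' (the continuous dual of V) such that for every t ∈ [0,T] with ‖f(t)‖ ≥ ε one has ⟨φ(t), f(t)⟩ = ‖f(t)‖ and ‖φ(t)‖_{V'} = 1. -/
open Filter Topology

set_option maxHeartbeats 1600000 in
theorem stmt_0 (V : Type*) [NormedAddCommGroup V] [NormedSpace ℝ V] [CompleteSpace V]
    (husm : ∀ ε : ℝ, 0 < ε → ∃ δ : ℝ, 0 < δ ∧ ∀ x y : V, ‖x‖ = 1 → ‖y‖ ≤ δ →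
      ‖x + y‖ + ‖x - y‖ ≤ 2 + ε * ‖y‖)
    (T : ℝ) (hT : 0 < T) (f : C(Set.Icc (0:ℝ) T, V)) (ε : ℝ) (hε : 0 < ε) :
    ∃ φ : C(Set.Icc (0:ℝ) T, V →L[ℝ] ℝ), ∀ t : Set.Icc (0:ℝ) T, ε ≤ ‖f t‖ →
      φ t (f t) = ‖f t‖ ∧ ‖φ t‖ = 1 := by
  classical
  -- the duality map
  set J : V → (V →L[ℝ] ℝ) := fun x =>
    if h : x = 0 then 0 else (exists_dual_vector ℝ x (norm_ne_zero_iff.mpr h)).choose with hJdef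
  have hJ1 : ∀ x : V, x ≠ 0 → ‖J x‖ = 1 := by
    intro x hx
    simp only [hJdef, dif_neg hx]
    exact (exists_dual_vector ℝ x (norm_ne_zero_iff.mpr hx)).choose_spec.1
  have hJ2 : ∀ x : V, x ≠ 0 → J x x = ‖x‖ := by
    intro x hx
    simp only [hJdef, dif_neg hx]
    exact_mod_cast (exists_dual_vector ℝ x (norm_ne_zero_iff.mpr hx)).choose_spec.2
  have hJle : ∀ x : V, ‖J x‖ ≤ 1 := by
    intro x
    by_cases hx : x = 0
    · simp [hJdef, hx]
    · exact le_of_eq (hJ1 x hx)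
  have hun : ∀ x : V, x ≠ 0 → ‖(‖x‖⁻¹ • x)‖ = 1 := by
    intro x hx
    rw [norm_smul, norm_inv, norm_norm, inv_mul_cancel₀ (norm_ne_zero_iff.mpr hx)]
  have hJu : ∀ x : V, x ≠ 0 → J x (‖x‖⁻¹ • x) = 1 := by
    intro x hx
    rw [map_smul, smul_eq_mul, hJ2 x hx, inv_mul_cancel₀ (norm_ne_zero_iff.mpr hx)]
  -- key uniform estimate from uniform smoothness
  have key : ∀ e : ℝ, 0 < e → ∃ d : ℝ, 0 < d ∧ ∀ x₁ x₂ : V, x₁ ≠ 0 → x₂ ≠ 0 →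
      ‖‖x₁‖⁻¹ • x₁ - ‖x₂‖⁻¹ • x₂‖ ≤ e * d → ‖J x₁ - J x₂‖ ≤ 2 * e := by
    intro e he
    obtain ⟨d, hd, hsm⟩ := husm e he
    refine ⟨d, hd, ?_⟩
    intro x₁ x₂ h₁ h₂ hclose
    set u₁ := ‖x₁‖⁻¹ • x₁ with hu₁
    set u₂ := ‖x₂‖⁻¹ • x₂ with hu₂
    have hb : ∀ y : V, ‖y‖ ≤ d → (J x₁ - J x₂) y ≤ e * ‖y‖ + e * d := by
      intro y hy
      have e1 : J x₁ (u₁ + y) ≤ ‖u₁ + y‖ := by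
        calc J x₁ (u₁ + y) ≤ ‖J x₁ (u₁ + y)‖ := le_abs_self _
          _ ≤ ‖J x₁‖ * ‖u₁ + y‖ := (J x₁).le_opNorm _
          _ = ‖u₁ + y‖ := by rw [hJ1 x₁ h₁, one_mul]
      have e2 : J x₂ (u₁ - y) ≤ ‖u₁ - y‖ := by
        calc J x₂ (u₁ - y) ≤ ‖J x₂ (u₁ - y)‖ := le_abs_self _
          _ ≤ ‖J x₂‖ * ‖u₁ - y‖ := (J x₂).le_opNorm _
          _ = ‖u₁ - y‖ := by rw [hJ1 x₂ h₂, one_mul]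
      have e3 : ‖u₁ + y‖ + ‖u₁ - y‖ ≤ 2 + e * ‖y‖ := hsm u₁ y (hun x₁ h₁) hy
      have e4 : (1 : ℝ) - e * d ≤ J x₂ u₁ := by
        have h5 : J x₂ u₁ = J x₂ u₂ + J x₂ (u₁ - u₂) := by
          rw [map_sub]; ring
        have h6 : -(e * d) ≤ J x₂ (u₁ - u₂) := by
          have : ‖J x₂ (u₁ - u₂)‖ ≤ e * d := by
            calc ‖J x₂ (u₁ - u₂)‖ ≤ ‖J x₂‖ * ‖u₁ - u₂‖ := (J x₂).le_opNorm _
              _ ≤ 1 * (e * d) := by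
                  apply mul_le_mul (hJle x₂) hclose (norm_nonneg _) zero_le_one
              _ = e * d := one_mul _
          rw [Real.norm_eq_abs] at this
          linarith [(abs_le.mp this).1]
        rw [h5, hJu x₂ h₂]
        linarith
      have h7 : J x₁ (u₁ + y) = 1 + J x₁ y := by rw [map_add, hJu x₁ h₁]
      have h8 : J x₂ (u₁ - y) = J x₂ u₁ - J x₂ y := by rw [map_sub]
      have := add_le_add e1 e2
      rw [h7, h8] at this
      simp only [ContinuousLinearMap.sub_apply]
      linarith
    apply ContinuousLinearMap.opNorm_le_bound _ (by positivity)
    intro y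
    by_cases hy : y = 0
    · simp [hy]
    have hy' : 0 < ‖y‖ := norm_pos_iff.mpr hy
    set z := (d / ‖y‖) • y with hzdef
    have hz : ‖z‖ = d := by
      rw [hzdef, norm_smul, Real.norm_eq_abs, abs_of_pos (div_pos hd hy'),
        div_mul_cancel₀ _ (ne_of_gt hy')]
    have p1 : (J x₁ - J x₂) z ≤ 2 * (e * d) := by
      have := hb z hz.le
      rw [hz] at this; linarith
    have p2 : (J x₁ - J x₂) (-z) ≤ 2 * (e * d) := by
      have := hb (-z) (by rw [norm_neg, hz])
      rw [norm_neg, hz] at this; linarith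
    have pabs : ‖(J x₁ - J x₂) z‖ ≤ 2 * (e * d) := by
      rw [Real.norm_eq_abs, abs_le]
      constructor
      · rw [map_neg] at p2; linarith
      · exact p1
    have hyz : y = (‖y‖ / d) • z := by
      rw [hzdef, smul_smul]
      rw [show ‖y‖ / d * (d / ‖y‖) = 1 by field_simp]
      rw [one_smul]
    calc ‖(J x₁ - J x₂) y‖ = ‖(‖y‖ / d) • ((J x₁ - J x₂) z)‖ := by
          rw [← map_smul, ← hyz]
      _ = (‖y‖ / d) * ‖(J x₁ - J x₂) z‖ := by
          rw [norm_smul, Real.norm_eq_abs, abs_of_pos (div_pos hy' hd)]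
      _ ≤ (‖y‖ / d) * (2 * (e * d)) := by
          apply mul_le_mul_of_nonneg_left pabs (le_of_lt (div_pos hy' hd))
      _ = 2 * e * ‖y‖ := by field_simp
  -- continuity of J away from 0
  have Jcont : ∀ x₀ : V, x₀ ≠ 0 → ContinuousAt J x₀ := by
    intro x₀ hx₀
    rw [Metric.continuousAt_iff]
    intro e' he'
    obtain ⟨d, hd, hkey⟩ := key (e' / 3) (by positivity)
    have hx₀n : (0 : ℝ) < ‖x₀‖ := norm_pos_iff.mpr hx₀
    have hu : ContinuousAt (fun x : V => ‖x‖⁻¹ • x) x₀ :=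
      ((continuous_norm.continuousAt).inv₀ (ne_of_gt hx₀n)).smul continuousAt_id
    rw [Metric.continuousAt_iff] at hu
    obtain ⟨δ₁, hδ₁, hu⟩ := hu (e' / 3 * d) (by positivity)
    refine ⟨min δ₁ ‖x₀‖, lt_min hδ₁ hx₀n, ?_⟩
    intro x hx
    have hxne : x ≠ 0 := by
      intro h
      rw [h, dist_eq_norm, zero_sub, norm_neg] at hx
      have := lt_of_lt_of_le hx (min_le_right _ _)
      exact lt_irrefl _ this
    have h1 : dist (‖x‖⁻¹ • x) (‖x₀‖⁻¹ • x₀) < e' / 3 * d :=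
      hu (lt_of_lt_of_le hx (min_le_left _ _))
    rw [dist_eq_norm] at h1
    have h2 := hkey x x₀ hxne hx₀ h1.le
    calc dist (J x) (J x₀) = ‖J x - J x₀‖ := dist_eq_norm _ _
      _ ≤ 2 * (e' / 3) := h2
      _ < e' := by linarith
  -- cutoff function
  set lam : Set.Icc (0:ℝ) T → ℝ := fun t => min ((2 / ε) * max (‖f t‖ - ε / 2) 0) 1
    with hlamdef
  have hlamcont : Continuous lam := by
    apply Continuous.min _ continuous_const
    exact continuous_const.mul
      (((map_continuous f).norm.sub continuous_const).max continuous_const)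
  have hlam0 : ∀ t, 0 ≤ lam t := by
    intro t
    apply le_min _ zero_le_one
    apply mul_nonneg (by positivity) (le_max_right _ _)
  have hlam1 : ∀ t, ε ≤ ‖f t‖ → lam t = 1 := by
    intro t ht
    apply min_eq_right
    have h1 : ε / 2 ≤ max (‖f t‖ - ε / 2) 0 :=
      le_trans (by linarith) (le_max_left _ _)
    calc (1 : ℝ) = (2 / ε) * (ε / 2) := by field_simp
      _ ≤ (2 / ε) * max (‖f t‖ - ε / 2) 0 := by
          apply mul_le_mul_of_nonneg_left h1 (by positivity)
  have hlamz : ∀ t, ‖f t‖ ≤ ε / 2 → lam t = 0 := by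
    intro t ht
    have : max (‖f t‖ - ε / 2) 0 = 0 := max_eq_right (by linarith)
    simp [hlamdef, this]
  -- the candidate function
  set Φ : Set.Icc (0:ℝ) T → (V →L[ℝ] ℝ) := fun t => lam t • J (f t) with hΦdef
  have hΦcont : Continuous Φ := by
    rw [continuous_iff_continuousAt]
    intro t₀
    rcases lt_or_ge (ε / 2) ‖f t₀‖ with h | h
    · have hne : f t₀ ≠ 0 := by
        intro hz; rw [hz, norm_zero] at h; linarith
      exact hlamcont.continuousAt.smul
        ((Jcont _ hne).comp (map_continuous f).continuousAt)
    · have h0 : Φ t₀ = 0 := by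
        simp [hΦdef, hlamz t₀ h]
      unfold ContinuousAt
      rw [h0, tendsto_zero_iff_norm_tendsto_zero]
      have hb : ∀ t, ‖Φ t‖ ≤ lam t := by
        intro t
        calc ‖Φ t‖ ≤ ‖lam t‖ * ‖J (f t)‖ := ContinuousLinearMap.opNorm_smul_le _ _
          _ = lam t * ‖J (f t)‖ := by
              rw [Real.norm_eq_abs, abs_of_nonneg (hlam0 t)]
          _ ≤ lam t := mul_le_of_le_one_right (hlam0 t) (hJle _)
      have hlt : Tendsto lam (𝓝 t₀) (𝓝 0) := by
        have := hlamcont.continuousAt (x := t₀)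
        rwa [ContinuousAt, hlamz t₀ h] at this
      exact squeeze_zero (fun t => norm_nonneg _) hb hlt
  refine ⟨⟨Φ, hΦcont⟩, ?_⟩
  intro t ht
  have hne : f t ≠ 0 := by
    intro h; rw [h, norm_zero] at ht; linarith
  constructor
  · show (lam t • J (f t)) (f t) = ‖f t‖
    rw [hlam1 t ht, one_smul, hJ2 _ hne]
  · show ‖lam t • J (f t)‖ = 1
    rw [hlam1 t ht, one_smul, hJ1 _ hne]
end

section
/- A normed vector space V is uniformly smooth if and only if its continuous dual space V' is uniformly convex. -/
set_option synthInstance.maxHeartbeats 1000000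
set_option maxHeartbeats 1000000

private lemma opNorm_le_of_unit {V : Type*} [NormedAddCommGroup V] [NormedSpace ℝ V]
    (g : V →L[ℝ] ℝ) {C : ℝ} (hC : 0 ≤ C) (h : ∀ z : V, ‖z‖ = 1 → g z ≤ C) : ‖g‖ ≤ C := by
  refine g.opNorm_le_bound hC fun v => ?_
  rcases eq_or_ne v 0 with rfl | hv
  · simp [hC]
  · have hnv : (0:ℝ) < ‖v‖ := norm_pos_iff.mpr hv
    have hz : ‖(‖v‖⁻¹ • v)‖ = 1 := by
      rw [norm_smul, norm_inv, norm_norm, inv_mul_cancel₀ hnv.ne']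
    have h1 := h _ hz
    have h2 := h _ (by simpa [norm_neg] using hz : ‖(-(‖v‖⁻¹ • v))‖ = 1)
    rw [map_neg] at h2
    have habs : |g (‖v‖⁻¹ • v)| ≤ C := abs_le.mpr ⟨by linarith, h1⟩
    have : g (‖v‖⁻¹ • v) = ‖v‖⁻¹ * g v := by simp
    rw [this, abs_mul, abs_inv, abs_norm] at habs
    calc ‖g v‖ = ‖v‖ * (‖v‖⁻¹ * |g v|) := by
          rw [← mul_assoc, mul_inv_cancel₀ hnv.ne', one_mul]; rfl
      _ ≤ ‖v‖ * C := by
          exact mul_le_mul_of_nonneg_left habs hnv.le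
      _ = C * ‖v‖ := mul_comm _ _

theorem stmt_2 (V : Type*) [NormedAddCommGroup V] [NormedSpace ℝ V] :
    (∀ ε : ℝ, 0 < ε → ∃ δ : ℝ, 0 < δ ∧ ∀ x y : V, ‖x‖ = 1 → ‖y‖ ≤ δ →
      ‖x + y‖ + ‖x - y‖ ≤ 2 + ε * ‖y‖) ↔
    (∀ ε : ℝ, 0 < ε → ∃ δ : ℝ, 0 < δ ∧ ∀ φ ψ : V →L[ℝ] ℝ, ‖φ‖ = ‖ψ‖ → ‖ψ‖ ≤ 1 →
      ε ≤ ‖φ - ψ‖ → ‖(1/2 : ℝ) • (φ + ψ)‖ ≤ 1 - δ) := by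
  constructor
  · -- uniform smoothness → uniform convexity of dual
    intro h ε hε
    obtain ⟨δ, hδ, hsm⟩ := h (ε / 2) (by positivity)
    refine ⟨ε * δ / 8, by positivity, fun φ ψ hfg hg hsep => ?_⟩
    have hφ : ‖φ‖ ≤ 1 := hfg ▸ hg
    have hf : 3 / 4 * ε < ‖φ - ψ‖ := lt_of_lt_of_le (by linarith) hsep
    obtain ⟨x, hx1, hx2⟩ := (φ - ψ).exists_lt_apply_of_lt_opNorm hf
    -- get x' with (φ - ψ) x' > 3/4 ε, ‖x'‖ < 1
    obtain ⟨x', hx'1, hx'2⟩ : ∃ x' : V, ‖x'‖ < 1 ∧ 3 / 4 * ε < (φ - ψ) x' := by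
      rcases le_or_gt 0 ((φ - ψ) x) with h0 | h0
      · exact ⟨x, hx1, by rwa [Real.norm_eq_abs, abs_of_nonneg h0] at hx2⟩
      · refine ⟨-x, by simpa using hx1, ?_⟩
        rw [map_neg]
        rwa [Real.norm_eq_abs, abs_of_neg h0] at hx2
    have hx'0 : x' ≠ 0 := by
      intro h0; rw [h0, map_zero] at hx'2; nlinarith
    set y : V := δ • x' with hy
    have hny : ‖y‖ ≤ δ := by
      rw [hy, norm_smul, Real.norm_eq_abs, abs_of_pos hδ]
      nlinarith [norm_nonneg x']
    have key : ∀ z : V, ‖z‖ = 1 → (φ + ψ) z ≤ 2 - ε * δ / 4 := by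
      intro z hz
      have e1 : φ (z + y) ≤ ‖z + y‖ := by
        calc φ (z + y) ≤ |φ (z + y)| := le_abs_self _
          _ ≤ ‖φ‖ * ‖z + y‖ := φ.le_opNorm _
          _ ≤ 1 * ‖z + y‖ := mul_le_mul_of_nonneg_right hφ (norm_nonneg _)
          _ = ‖z + y‖ := one_mul _
      have e2 : ψ (z - y) ≤ ‖z - y‖ := by
        calc ψ (z - y) ≤ |ψ (z - y)| := le_abs_self _
          _ ≤ ‖ψ‖ * ‖z - y‖ := ψ.le_opNorm _
          _ ≤ 1 * ‖z - y‖ := mul_le_mul_of_nonneg_right hg (norm_nonneg _)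
          _ = ‖z - y‖ := one_mul _
      have e3 : ‖z + y‖ + ‖z - y‖ ≤ 2 + ε / 2 * ‖y‖ := hsm z y hz hny
      have e4 : ε / 2 * ‖y‖ ≤ ε / 2 * δ :=
        mul_le_mul_of_nonneg_left hny (by positivity)
      have e5 : (φ - ψ) y = δ * (φ - ψ) x' := by
        rw [hy, map_smul]; rfl
      have e6 : 3 / 4 * ε * δ ≤ (φ - ψ) y := by
        rw [e5]; nlinarith
      have e7 : (φ + ψ) z = φ (z + y) + ψ (z - y) - (φ - ψ) y := by
        simp only [ContinuousLinearMap.add_apply, ContinuousLinearMap.sub_apply,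
          map_add, map_sub]
        ring
      rw [e7]
      nlinarith
    have hC : 0 ≤ 2 - ε * δ / 4 := by
      have hz : ‖(‖x'‖⁻¹ • x')‖ = 1 := by
        rw [norm_smul, norm_inv, norm_norm,
          inv_mul_cancel₀ (norm_pos_iff.mpr hx'0).ne']
      have h1 := key _ hz
      have h2 := key _ (by simpa [norm_neg] using hz : ‖(-(‖x'‖⁻¹ • x'))‖ = 1)
      rw [map_neg] at h2
      linarith
    have hn : ‖φ + ψ‖ ≤ 2 - ε * δ / 4 := opNorm_le_of_unit _ hC key
    have hhalf : ‖(1/2 : ℝ) • (φ + ψ)‖ = 1/2 * ‖φ + ψ‖ := by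
      have := norm_smul (1/2 : ℝ) (φ + ψ)
      simpa using this
    rw [hhalf]
    linarith
  · -- uniform convexity of dual → uniform smoothness
    intro h ε hε
    obtain ⟨δ, hδ, hcv⟩ := h ε hε
    refine ⟨δ, hδ, fun x y hx hy => ?_⟩
    have : Nontrivial V := by
      refine ⟨x, 0, ?_⟩
      intro h0; rw [h0, norm_zero] at hx; norm_num at hx
    obtain ⟨φ, hφ1, hφ2⟩ := exists_dual_vector' ℝ (x + y)
    obtain ⟨ψ, hψ1, hψ2⟩ := exists_dual_vector' ℝ (x - y)
    have hφ2' : φ (x + y) = ‖x + y‖ := by exact_mod_cast hφ2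
    have hψ2' : ψ (x - y) = ‖x - y‖ := by exact_mod_cast hψ2
    have key : ‖x + y‖ + ‖x - y‖ = (φ + ψ) x + (φ - ψ) y := by
      rw [← hφ2', ← hψ2']
      simp only [ContinuousLinearMap.add_apply, ContinuousLinearMap.sub_apply,
        map_add, map_sub]
      ring
    have b2 : (φ - ψ) y ≤ ‖φ - ψ‖ * ‖y‖ := by
      calc (φ - ψ) y ≤ |(φ - ψ) y| := le_abs_self _
        _ ≤ ‖φ - ψ‖ * ‖y‖ := (φ - ψ).le_opNorm _
    have b1 : (φ + ψ) x ≤ ‖φ + ψ‖ := by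
      calc (φ + ψ) x ≤ |(φ + ψ) x| := le_abs_self _
        _ ≤ ‖φ + ψ‖ * ‖x‖ := (φ + ψ).le_opNorm _
        _ = ‖φ + ψ‖ := by rw [hx, mul_one]
    rcases lt_or_ge ‖φ - ψ‖ ε with hc | hc
    · have : ‖φ + ψ‖ ≤ 2 := by
        calc ‖φ + ψ‖ ≤ ‖φ‖ + ‖ψ‖ := norm_add_le _ _
          _ = 2 := by rw [hφ1, hψ1]; norm_num
      have hby : ‖φ - ψ‖ * ‖y‖ ≤ ε * ‖y‖ :=
        mul_le_mul_of_nonneg_right hc.le (norm_nonneg _)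
      linarith
    · have hmid := hcv φ ψ (by rw [hφ1, hψ1]) (le_of_eq hψ1) hc
      have hhalf : ‖(1/2 : ℝ) • (φ + ψ)‖ = 1/2 * ‖φ + ψ‖ := by
        have := norm_smul (1/2 : ℝ) (φ + ψ)
        simpa using this
      rw [hhalf] at hmid
      have hsum : ‖φ + ψ‖ ≤ 2 - 2 * δ := by linarith
      have hd : ‖φ - ψ‖ ≤ 2 := by
        calc ‖φ - ψ‖ ≤ ‖φ‖ + ‖ψ‖ := norm_sub_le _ _
          _ = 2 := by rw [hφ1, hψ1]; norm_num
      have hby : ‖φ - ψ‖ * ‖y‖ ≤ 2 * ‖y‖ :=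
        mul_le_mul_of_nonneg_right hd (norm_nonneg _)
      have h0 : 0 ≤ ε * ‖y‖ := mul_nonneg hε.le (norm_nonneg y)
      linarith
end

section
/- Let V be a uniformly convex Banach space. If a sequence (x_n) in V converges weakly to x and ‖x_n‖ converges to ‖x‖, then x_n converges to x in norm (the Radon-Riesz property). -/
theorem stmt_3 (V : Type*) [NormedAddCommGroup V] [NormedSpace ℝ V] [CompleteSpace V]
    (hucv : ∀ ε : ℝ, 0 < ε → ∃ δ : ℝ, 0 < δ ∧ ∀ x y : V, ‖x‖ = ‖y‖ → ‖y‖ ≤ 1 →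
      ε ≤ ‖x - y‖ → ‖(1/2 : ℝ) • (x + y)‖ ≤ 1 - δ)
    (x : ℕ → V) (x₀ : V)
    (hweak : ∀ φ : V →L[ℝ] ℝ, Filter.Tendsto (fun n => φ (x n)) Filter.atTop (nhds (φ x₀)))
    (hnorm : Filter.Tendsto (fun n => ‖x n‖) Filter.atTop (nhds ‖x₀‖)) :
    Filter.Tendsto (fun n => ‖x n - x₀‖) Filter.atTop (nhds 0) := by
  by_cases hx₀ : x₀ = 0
  · subst hx₀
    simpa using hnorm
  have hc : (0:ℝ) < ‖x₀‖ := norm_pos_iff.mpr hx₀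
  set c : ℝ := ‖x₀‖ with hcdef
  -- eventually norms positive
  have hev : ∀ᶠ n in Filter.atTop, 0 < ‖x n‖ := by
    have := hnorm.eventually (eventually_gt_nhds (show c/2 < c by linarith))
    filter_upwards [this] with n hn
    linarith
  obtain ⟨φ, hφ1, hφx⟩ := exists_dual_vector ℝ x₀ (ne_of_gt hc)
  set y₀ : V := c⁻¹ • x₀ with hy₀def
  have hy₀norm : ‖y₀‖ = 1 := by
    rw [hy₀def, norm_smul, Real.norm_eq_abs, abs_inv, abs_of_pos hc]
    field_simp
    exact hcdef.symm
  have hφy₀ : φ y₀ = 1 := by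
    rw [hy₀def, map_smul, smul_eq_mul, hφx]
    push_cast
    field_simp
    exact hcdef.symm
  set y : ℕ → V := fun n => ‖x n‖⁻¹ • x n with hydef
  -- φ (y n) → 1
  have hφy : Filter.Tendsto (fun n => φ (y n)) Filter.atTop (nhds 1) := by
    have h1 : Filter.Tendsto (fun n => ‖x n‖⁻¹ * φ (x n)) Filter.atTop (nhds (c⁻¹ * c)) := by
      have := (hnorm.inv₀ (ne_of_gt hc)).mul (hweak φ)
      simpa [hφx] using this
    rw [inv_mul_cancel₀ (ne_of_gt hc)] at h1
    simpa [hydef, map_smul] using h1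
  -- ‖y n - y₀‖ → 0
  have key : Filter.Tendsto (fun n => ‖y n - y₀‖) Filter.atTop (nhds 0) := by
    rw [Metric.tendsto_atTop]
    intro ε hε
    obtain ⟨δ, hδ, hδ'⟩ := hucv ε hε
    have hmid : Filter.Tendsto (fun n => φ ((1/2 : ℝ) • (y n + y₀))) Filter.atTop (nhds 1) := by
      have h := Filter.Tendsto.const_mul (1/2 : ℝ)
        (hφy.add (tendsto_const_nhds (x := (1:ℝ))))
      norm_num at h
      simpa [map_smul, map_add, smul_eq_mul, hφy₀, mul_add] using h
    have h2 : ∀ᶠ n in Filter.atTop, 1 - δ < φ ((1/2 : ℝ) • (y n + y₀)) :=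
      hmid.eventually (eventually_gt_nhds (by linarith))
    rw [Filter.eventually_atTop] at h2 hev
    obtain ⟨N1, hN1⟩ := h2
    obtain ⟨N2, hN2⟩ := hev
    refine ⟨max N1 N2, fun n hn => ?_⟩
    have hn1 := hN1 n (le_trans (le_max_left _ _) hn)
    have hn2 := hN2 n (le_trans (le_max_right _ _) hn)
    have hyn : ‖y n‖ = 1 := by
      rw [hydef]
      simp only
      rw [norm_smul, Real.norm_eq_abs, abs_inv, abs_of_pos hn2,
        inv_mul_cancel₀ (ne_of_gt hn2)]
    have hbound : φ ((1/2 : ℝ) • (y n + y₀)) ≤ ‖(1/2 : ℝ) • (y n + y₀)‖ := by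
      calc φ ((1/2 : ℝ) • (y n + y₀)) ≤ ‖φ ((1/2 : ℝ) • (y n + y₀))‖ := by rw [Real.norm_eq_abs]; exact le_abs_self _
        _ ≤ ‖φ‖ * ‖(1/2 : ℝ) • (y n + y₀)‖ := φ.le_opNorm _
        _ = ‖(1/2 : ℝ) • (y n + y₀)‖ := by rw [hφ1, one_mul]
    by_contra hcon
    push_neg at hcon
    have : ε ≤ ‖y n - y₀‖ := by
      have := abs_nonneg (‖y n - y₀‖)
      rw [Real.dist_eq, sub_zero, abs_of_nonneg (norm_nonneg _)] at hcon
      linarith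
    have := hδ' (y n) y₀ (by rw [hyn, hy₀norm]) (le_of_eq hy₀norm) this
    linarith
  -- conclude
  have hxn : ∀ᶠ n in Filter.atTop, ‖x n - x₀‖ ≤ ‖x n‖ * ‖y n - y₀‖ + |‖x n‖ - c| := by
    filter_upwards [hev] with n hn
    have hx_eq : x n = ‖x n‖ • y n := by
      rw [hydef]; simp only
      rw [smul_smul, mul_inv_cancel₀ (ne_of_gt hn), one_smul]
    have hx₀_eq : x₀ = c • y₀ := by
      rw [hy₀def, smul_smul, mul_inv_cancel₀ (ne_of_gt hc), one_smul]
    calc ‖x n - x₀‖ = ‖‖x n‖ • (y n - y₀) + (‖x n‖ - c) • y₀‖ := by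
          congr 1
          rw [smul_sub, sub_smul, ← hx_eq, ← hx₀_eq]
          abel
      _ ≤ ‖‖x n‖ • (y n - y₀)‖ + ‖(‖x n‖ - c) • y₀‖ := norm_add_le _ _
      _ = ‖x n‖ * ‖y n - y₀‖ + |‖x n‖ - c| := by
          rw [norm_smul, norm_smul, Real.norm_eq_abs, Real.norm_eq_abs,
            abs_of_pos hn, hy₀norm, mul_one]
  have hrhs : Filter.Tendsto (fun n => ‖x n‖ * ‖y n - y₀‖ + |‖x n‖ - c|)
      Filter.atTop (nhds 0) := by
    have h1 := hnorm.mul key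
    have h2 : Filter.Tendsto (fun n => |‖x n‖ - c|) Filter.atTop (nhds 0) := by
      have := (hnorm.sub (tendsto_const_nhds (x := c))).abs
      simpa using this
    simpa using h1.add h2
  exact squeeze_zero' (Filter.Eventually.of_forall fun n => norm_nonneg _) hxn hrhs
end

section
/- Let V' be a uniformly convex dual space, let x, y be unit vectors in a normed space V, and let φ, ψ ∈ V' with ‖φ‖ = ‖ψ‖ = 1, ⟨φ, x⟩ = 1, ⟨ψ, y⟩ = 1. For every ε > 0 choose δ > 0 as in the uniform convexity of V'. If ‖x − y‖ < 2δ then ‖φ − ψ‖ < ε. -/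
theorem stmt_5 (V : Type*) [NormedAddCommGroup V] [NormedSpace ℝ V]
    (ε δ : ℝ) (hε : 0 < ε) (hδ : 0 < δ)
    (hucv : ∀ Φ Ψ : V →L[ℝ] ℝ, ‖Φ‖ = ‖Ψ‖ → ‖Ψ‖ ≤ 1 → ε ≤ ‖Φ - Ψ‖ →
      ‖(1/2 : ℝ) • (Φ + Ψ)‖ ≤ 1 - δ)
    (x y : V) (hx : ‖x‖ = 1) (hy : ‖y‖ = 1)
    (φ ψ : V →L[ℝ] ℝ) (hφ : ‖φ‖ = 1) (hψ : ‖ψ‖ = 1)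
    (hφx : φ x = 1) (hψy : ψ y = 1)
    (hxy : ‖x - y‖ < 2 * δ) :
    ‖φ - ψ‖ < ε := by
  by_contra h
  push_neg at h
  have hmid : ‖(1/2 : ℝ) • (φ + ψ)‖ ≤ 1 - δ :=
    hucv φ ψ (hφ.trans hψ.symm) hψ.le h
  have hψx : 1 - 2 * δ < ψ x := by
    have h1 : ψ x - ψ y = ψ (x - y) := by simp
    have h2 : |ψ (x - y)| ≤ ‖x - y‖ := by
      calc |ψ (x - y)| = ‖ψ (x - y)‖ := rfl
        _ ≤ ‖ψ‖ * ‖x - y‖ := ψ.le_opNorm _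
        _ = ‖x - y‖ := by rw [hψ]; ring
    have := abs_le.mp h2
    nlinarith [this.1]
  have heval : ((1/2 : ℝ) • (φ + ψ)) x = (1 + ψ x) / 2 := by
    simp [hφx]; ring
  have hle : ((1/2 : ℝ) • (φ + ψ)) x ≤ ‖(1/2 : ℝ) • (φ + ψ)‖ := by
    calc ((1/2 : ℝ) • (φ + ψ)) x ≤ |((1/2 : ℝ) • (φ + ψ)) x| := le_abs_self _
      _ ≤ ‖(1/2 : ℝ) • (φ + ψ)‖ * ‖x‖ := ((1/2 : ℝ) • (φ + ψ)).le_opNorm x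
      _ = ‖(1/2 : ℝ) • (φ + ψ)‖ := by rw [hx, mul_one]
  rw [heval] at hle
  linarith
end
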